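/- Let w ∈ W_n. If R_i is right admissible for w, then |inv(Q(R_i(w))) − inv(Q(w))| = 1 while inv(Q_k(R_i(w))) = inv(Q_k(w)) for every component index 0 ≤ k ≤ r−1. Dually, if L_i is left admissible for w, then |inv(P(L_i(w))) − inv(P(w))| = 1 while inv(P_k(L_i(w))) = inv(P_k(w)) for every 0 ≤ k ≤ r−1. -/

import Mathlib

open scoped BigOperators

/-!
Common definitions: the complex reflection group `G(r,1,n)` recorded in one-line
notation, its one-dimensional representations, the generalized Robinson–Schensted
map to pairs of `r`-multitableaux, and the associated tableau statistics.
-/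

/-- An element of `W_n = G(r,1,n)` in one-line notation
`w = [ζ^{a 0} σ 0, …, ζ^{a (n-1)} σ (n-1)]`: the nonzero entry of column `i`
is `ζ ^ (a i)` and lies in row `σ i`. -/
@[ext]
structure GW (r n : ℕ) where
  a : Fin n → ZMod r
  σ : Equiv.Perm (Fin n)

namespace GW

variable {r n : ℕ}

instance : Mul (GW r n) := ⟨fun w v => ⟨fun j => w.a (v.σ j) + v.a j, w.σ * v.σ⟩⟩
instance : One (GW r n) := ⟨⟨fun _ => 0, 1⟩⟩
instance : Inv (GW r n) := ⟨fun w => ⟨fun j => -(w.a (w.σ⁻¹ j)), w.σ⁻¹⟩⟩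

@[simp] lemma mul_a (w v : GW r n) (j : Fin n) : (w * v).a j = w.a (v.σ j) + v.a j := rfl
@[simp] lemma mul_sigma (w v : GW r n) : (w * v).σ = w.σ * v.σ := rfl
@[simp] lemma one_a (j : Fin n) : (1 : GW r n).a j = 0 := rfl
@[simp] lemma one_sigma : (1 : GW r n).σ = 1 := rfl
@[simp] lemma inv_a (w : GW r n) (j : Fin n) : (w⁻¹).a j = -(w.a (w.σ⁻¹ j)) := rfl
@[simp] lemma inv_sigma (w : GW r n) : (w⁻¹).σ = w.σ⁻¹ := rfl

instance : Group (GW r n) where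
  mul_assoc w v u := by
    ext j
    · simp [Equiv.Perm.mul_apply, add_assoc]
    · simp [mul_assoc]
  one_mul w := by ext j <;> simp
  mul_one w := by ext j <;> simp
  inv_mul_cancel w := by
    ext j
    · simp
    · simp

end GW

/-- `ζ = exp(2π√-1 / r)`, a primitive `r`-th root of unity. -/
noncomputable def zeta (r : ℕ) : ℂ := Complex.exp (2 * Real.pi * Complex.I / r)

/-- The one-dimensional representation `sgn_i` of `W_n = G(r,1,n)`:
`sgn_i w = ζ^{i (a_1 + ⋯ + a_n)} ⬝ sgn σ`. -/
noncomputable def sgnRep (r n : ℕ) (i : ℕ) (w : GW r n) : ℂ :=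
  zeta r ^ (i * ∑ j, (w.a j).val) * ((Equiv.Perm.sign w.σ : ℤ) : ℂ)

/-- A tableau, recorded as its list of rows of labels. -/
abbrev Tab := List (List ℕ)

/-- Robinson–Schensted row insertion of the value `x` into a tableau. -/
def rowInsert : ℕ → Tab → Tab
  | x, [] => [[x]]
  | x, row :: rest =>
    if h : row.findIdx (fun y => decide (x < y)) < row.length then
      row.set (row.findIdx (fun y => decide (x < y))) x ::
        rowInsert (row.get ⟨row.findIdx (fun y => decide (x < y)), h⟩) rest
    else (row ++ [x]) :: rest

/-- The shape of a tableau: its list of row lengths. -/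
def shape (T : Tab) : List ℕ := T.map List.length

/-- Append the label `lab` at the end of row `i` of the (recording) tableau `Q`. -/
def place (Q : Tab) (i lab : ℕ) : Tab :=
  if i < Q.length then Q.set i ((Q.getD i []) ++ [lab]) else Q ++ [[lab]]

/-- One step of the Robinson–Schensted algorithm: insert the value `x` into the
insertion tableau and record the label `lab` in the new box of the recording
tableau. -/
def RSstep : Tab × Tab → ℕ × ℕ → Tab × Tab := fun PQ xl =>
  let P' := rowInsert xl.1 PQ.1
  let i := (List.range P'.length).findIdx
    (fun i => decide ((PQ.1.getD i []).length < (P'.getD i []).length))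
  (P', place PQ.2 i xl.2)

/-- The classical Robinson–Schensted correspondence applied to a word of
(value, label) pairs, producing the insertion and recording tableaux. -/
def RSword (word : List (ℕ × ℕ)) : Tab × Tab := word.foldl RSstep ([], [])

/-- The positions `i` (in increasing order) whose attached exponent `a i` equals `k`. -/
def labelIdx {r n : ℕ} (w : GW r n) (k : ℕ) : List (Fin n) :=
  (List.finRange n).filter (fun i => decide ((w.a i).val = k))

/-- The word `w^(k)` together with its recording labels: the values `σ i` (1-based)
attached to the positions `i` (1-based) with `a i = k`, in increasing order of `i`. -/
def wordPairs {r n : ℕ} (w : GW r n) (k : ℕ) : List (ℕ × ℕ) :=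
  (labelIdx w k).map (fun i => ((w.σ i : ℕ) + 1, (i : ℕ) + 1))

/-- The insertion multitableau `P(w)` of the generalized Robinson–Schensted map. -/
def Ptab {r n : ℕ} (w : GW r n) : Fin r → Tab := fun k => (RSword (wordPairs w k)).1

/-- The recording multitableau `Q(w)` of the generalized Robinson–Schensted map. -/
def Qtab {r n : ℕ} (w : GW r n) : Fin r → Tab := fun k => (RSword (wordPairs w k)).2

/-- The set of labels of a tableau. -/
def labels (T : Tab) : Finset ℕ := T.flatten.toFinset

/-- The (0-based) index of the row of `T` containing the label `x`. -/
def rowOf (T : Tab) (x : ℕ) : ℕ := T.findIdx (fun row => decide (x ∈ row))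

/-- The number of inversions of a tableau: pairs `(i, j)` with `i < j` and the box
labeled `i` in a row strictly below the box labeled `j`. -/
def invTab (T : Tab) : ℕ :=
  ((labels T ×ˢ labels T).filter (fun p => p.1 < p.2 ∧ rowOf T p.2 < rowOf T p.1)).card

/-- `crossInv S T` is the number of pairs `(j, i)` with `j > i`, `j` a label of `S`
and `i` a label of `T`, i.e. the cardinality of `Inv(S, T)`. -/
def crossInv (S T : Tab) : ℕ :=
  ((labels S ×ˢ labels T).filter (fun p => p.2 < p.1)).card

/-- The number of inversions of a multitableau. -/
def invMulti {r : ℕ} (T : Fin r → Tab) : ℕ :=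
  (∑ k, invTab (T k)) + ∑ k, ∑ l, if k < l then crossInv (T k) (T l) else 0

/-- The sign `(-1)^{inv T}` of a multitableau. -/
def signMulti {r : ℕ} (T : Fin r → Tab) : ℂ := (-1) ^ invMulti T

/-- The number of boxes in the even-indexed rows (1-based indexing) of a tableau. -/
def eTab (T : Tab) : ℕ :=
  ∑ i ∈ Finset.range T.length, if i % 2 = 1 then (T.getD i []).length else 0

/-- The total number of boxes in the even-indexed rows of a multitableau. -/
def eMulti {r : ℕ} (T : Fin r → Tab) : ℕ := ∑ k, eTab (T k)

/-- The number of boxes of a tableau. -/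
def sizeTab (T : Tab) : ℕ := T.flatten.length

/-- `2 ⬝ spin T = Σ_k k ⬝ |sh(T_k)|`. -/
def twoSpin {r : ℕ} (T : Fin r → Tab) : ℕ := ∑ k : Fin r, (k : ℕ) * sizeTab (T k)

/-- The spin statistic `spin T = (1/2) Σ_k k ⬝ |sh(T_k)|`. -/
def spin {r : ℕ} (T : Fin r → Tab) : ℚ := (twoSpin T : ℚ) / 2

/-- The function `π_i(w) = (-1)^{e(P)} (ζ^i)^{spin P + spin Q} sign(P) sign(Q)`
where `(P, Q) = RS(w)`. -/
noncomputable def piStat (r n : ℕ) (i : ℕ) (w : GW r n) : ℂ :=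
  (-1) ^ eMulti (Ptab w) *
    (zeta r ^ i) ^ (((spin (Ptab w) + spin (Qtab w) : ℚ) : ℂ)) *
    signMulti (Ptab w) * signMulti (Qtab w)

/-- `T` is a standard Young `r`-multitableau of rank `n`: each component consists of
nonempty rows of weakly decreasing lengths, labels strictly increase along rows and
down columns, and the labels used are exactly `1, …, n`, each exactly once. -/
def IsStandardMulti (r n : ℕ) (T : Fin r → Tab) : Prop :=
  (∀ k : Fin r,
      (∀ row ∈ T k, row ≠ [] ∧ List.Chain' (· < ·) row) ∧
      List.Chain' (fun r1 r2 => r2.length ≤ r1.length ∧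
        ∀ j < r2.length, r1.getD j 0 < r2.getD j 0) (T k)) ∧
  (∑ k : Fin r, ((T k).flatten : Multiset ℕ)) = (Finset.Icc 1 n).val

/-- A multitableau is ascending if every label of `T k` is smaller than every label
of `T (k+1)`. -/
def AscendingMulti {r : ℕ} (T : Fin r → Tab) : Prop :=
  ∀ (k : ℕ) (h : k + 1 < r),
    ∀ x ∈ labels (T ⟨k, by omega⟩), ∀ y ∈ labels (T ⟨k + 1, h⟩), x < y

/-- An element `w ∈ W_n` is ascending if its exponents increase weakly and, for each
`k < r - 1`, every element of the word `w^(k)` is smaller than every element of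
`w^(k+1)`. -/
def AscendingElem {r n : ℕ} (w : GW r n) : Prop :=
  (∀ i j : Fin n, i ≤ j → (w.a i).val ≤ (w.a j).val) ∧
  ∀ k : ℕ, k + 1 < r →
    ∀ x ∈ (wordPairs w k).map Prod.fst, ∀ y ∈ (wordPairs w (k + 1)).map Prod.fst, x < y

/-- The generator `s_0 = [ζ·1, 2, …, n]`. -/
def s0El (r n : ℕ) : GW r n := ⟨fun i => if (i : ℕ) = 0 then 1 else 0, 1⟩

/-- The generator `s_j` (for `1 ≤ j ≤ n - 1`): the permutation matrix of the
transposition interchanging `j` and `j + 1` (1-based values). -/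
def sEl (r n : ℕ) (j : ℕ) (h1 : 1 ≤ j) (h2 : j + 1 ≤ n) : GW r n :=
  ⟨fun _ => 0, Equiv.swap ⟨j - 1, by omega⟩ ⟨j, by omega⟩⟩

/-- The left operator `L_j(w) = s_j ⬝ w`. -/
def Lop {r n : ℕ} (w : GW r n) (j : ℕ) (h1 : 1 ≤ j) (h2 : j + 1 ≤ n) : GW r n :=
  sEl r n j h1 h2 * w

/-- The right operator `R_j(w) = w ⬝ s_j`. -/
def Rop {r n : ℕ} (w : GW r n) (j : ℕ) (h1 : 1 ≤ j) (h2 : j + 1 ≤ n) : GW r n :=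
  w * sEl r n j h1 h2

/-- `L_j` is left admissible for `w`: the exponents attached to the entries with
values `j` and `j+1` differ. -/
def LeftAdm {r n : ℕ} (w : GW r n) (j : ℕ) (h1 : 1 ≤ j) (h2 : j + 1 ≤ n) : Prop :=
  w.a (w.σ⁻¹ ⟨j - 1, by omega⟩) ≠ w.a (w.σ⁻¹ ⟨j, by omega⟩)

/-- `R_j` is right admissible for `w`: the exponents in positions `j` and `j+1`
differ, i.e. `a_j ≠ a_{j+1}`. -/
def RightAdm {r n : ℕ} (w : GW r n) (j : ℕ) (h1 : 1 ≤ j) (h2 : j + 1 ≤ n) : Prop :=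
  w.a ⟨j - 1, by omega⟩ ≠ w.a ⟨j, by omega⟩

/-- A single admissible transformation: `w ↦ L_j(w)` for a left admissible `L_j`,
or `w ↦ R_j(w)` for a right admissible `R_j`. -/
inductive AdmStep (r n : ℕ) : GW r n → GW r n → Prop
  | left (w : GW r n) (j : ℕ) (h1 : 1 ≤ j) (h2 : j + 1 ≤ n)
      (ha : LeftAdm w j h1 h2) : AdmStep r n w (Lop w j h1 h2)
  | right (w : GW r n) (j : ℕ) (h1 : 1 ≤ j) (h2 : j + 1 ≤ n)
      (ha : RightAdm w j h1 h2) : AdmStep r n w (Rop w j h1 h2)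

/-!
Write `τ` for the transposition of `j` and `j + 1`. Admissibility says that `j` and `j + 1`
(as positions for `R_j`, as values for `L_j`) belong to two different words `w^(k₀)`, `w^(k₁)`.
Hence `R_j` changes each word only by applying `τ` to its recording labels, and `L_j` only by
applying `τ` to its letters; on the letters or labels of a single word `τ` is order preserving.
Robinson–Schensted insertion only compares letters, so every `Q_k(R_j w)` (resp. `P_k(L_j w)`)
is `Q_k(w)` (resp. `P_k(w)`) relabelled by `τ`, with the same inversions. Across components only
the pair `{j, j + 1}` changes between the two orders, so `inv` of the multitableau moves by one.
-/

theorem Equiv.strictMonoOn_swap_of_covBy {α : Type*} [LinearOrder α] {a b : α} (hab : a ⋖ b)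
    {s : Set α} (hs : ¬(a ∈ s ∧ b ∈ s)) : StrictMonoOn (Equiv.swap a b) s := by
  intro x hx y hy hxy
  rcases eq_or_ne x a with rfl | hxa
  · have hyb : y ≠ b := fun h => hs ⟨hx, h ▸ hy⟩
    rw [Equiv.swap_apply_left, Equiv.swap_apply_of_ne_of_ne hxy.ne' hyb]
    exact lt_of_le_of_ne (hab.ge_of_gt hxy) hyb.symm
  rcases eq_or_ne x b with rfl | hxb
  · rw [Equiv.swap_apply_right, Equiv.swap_apply_of_ne_of_ne (hab.lt.trans hxy).ne' hxy.ne']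
    exact hab.lt.trans hxy
  rw [Equiv.swap_apply_of_ne_of_ne hxa hxb]
  rcases eq_or_ne y a with rfl | hya
  · rw [Equiv.swap_apply_left]
    exact hxy.trans hab.lt
  rcases eq_or_ne y b with rfl | hyb
  · rw [Equiv.swap_apply_right]
    exact lt_of_le_of_ne (hab.le_of_lt hxy) hxa
  · rwa [Equiv.swap_apply_of_ne_of_ne hya hyb]

def relabel (f : ℕ → ℕ) (T : Tab) : Tab := T.map (List.map f)

theorem getD_relabel (f : ℕ → ℕ) (T : Tab) (i : ℕ) :
    (relabel f T).getD i [] = (T.getD i []).map f := by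
  simp only [relabel, List.getD_eq_getElem?_getD, List.getElem?_map]
  cases T[i]? <;> rfl

theorem length_relabel (f : ℕ → ℕ) (T : Tab) : (relabel f T).length = T.length :=
  List.length_map _

theorem labels_relabel (f : ℕ → ℕ) (T : Tab) : labels (relabel f T) = (labels T).image f := by
  ext a
  simp [labels, relabel, ← List.map_flatten]

theorem rowOf_relabel {f : ℕ → ℕ} (hf : Function.Injective f) (T : Tab) (x : ℕ) :
    rowOf (relabel f T) (f x) = rowOf T x := by
  simp [rowOf, relabel, List.findIdx_map, Function.comp_def, List.mem_map_of_injective hf]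

theorem invTab_relabel {f : ℕ → ℕ} (hf : Function.Injective f) (T : Tab)
    (hmono : StrictMonoOn f (labels T)) : invTab (relabel f T) = invTab T := by
  classical
  rw [invTab, labels_relabel, ← Finset.prodMap_image_product, Finset.filter_image,
    Finset.card_image_of_injective _ (hf.prodMap hf), invTab]
  congr 1
  refine Finset.filter_congr fun ⟨x, y⟩ hxy => ?_
  rw [Finset.mem_product] at hxy
  simp [rowOf_relabel hf, hmono.lt_iff_lt hxy.1 hxy.2]

theorem crossInv_relabel_swap (S T : Tab) (j : ℕ) :
    (crossInv (relabel (Equiv.swap j (j + 1)) S) (relabel (Equiv.swap j (j + 1)) T) : ℤ) =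
      crossInv S T + (if j ∈ labels S ∧ j + 1 ∈ labels T then 1 else 0) -
        (if j + 1 ∈ labels S ∧ j ∈ labels T then 1 else 0) := by
  classical
  have key : ∀ p : ℕ × ℕ,
      ((if Equiv.swap j (j + 1) p.2 < Equiv.swap j (j + 1) p.1 then 1 else 0 : ℕ) : ℤ) =
        (if p.2 < p.1 then 1 else 0) + (if p = (j, j + 1) then 1 else 0) -
          (if p = (j + 1, j) then 1 else 0) := by
    rintro ⟨x, y⟩
    simp only [Equiv.swap_apply_def, Prod.mk.injEq]
    split_ifs <;> omega
  rw [crossInv, crossInv, labels_relabel, labels_relabel, ← Finset.prodMap_image_product,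
    Finset.filter_image, Finset.card_image_of_injective _
      ((Equiv.injective _).prodMap (Equiv.injective _)),
    Finset.card_filter, Finset.card_filter, Nat.cast_sum, Nat.cast_sum]
  simp only [Prod.map_fst, Prod.map_snd]
  rw [Finset.sum_congr rfl fun p _ => key p, Finset.sum_sub_distrib, Finset.sum_add_distrib,
    Finset.sum_ite_eq', Finset.sum_ite_eq']
  simp [Finset.mem_product]

theorem invTab_relabel_swap {T : Tab} {j : ℕ} (h : ¬(j ∈ labels T ∧ j + 1 ∈ labels T)) :
    invTab (relabel (Equiv.swap j (j + 1)) T) = invTab T :=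
  invTab_relabel (Equiv.injective _) T
    (Equiv.strictMonoOn_swap_of_covBy (Order.covBy_add_one j) (by simpa using h))

theorem invMulti_relabel_swap {r : ℕ} (T : Fin r → Tab) {j : ℕ} {k₀ k₁ : Fin r}
    (hinv : ∀ k, invTab (relabel (Equiv.swap j (j + 1)) (T k)) = invTab (T k))
    (hj : ∀ k, j ∈ labels (T k) ↔ k = k₀) (hj' : ∀ k, j + 1 ∈ labels (T k) ↔ k = k₁) :
    (invMulti (fun k => relabel (Equiv.swap j (j + 1)) (T k)) : ℤ) =
      invMulti T + (if k₀ < k₁ then 1 else 0) - (if k₁ < k₀ then 1 else 0) := by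
  simp only [invMulti, hinv, Nat.cast_add, Nat.cast_sum, Nat.cast_ite, Nat.cast_zero,
    crossInv_relabel_swap, hj, hj']
  have hsplit (k l : Fin r) (c : ℤ) :
      (if k < l then c + (if k = k₀ ∧ l = k₁ then 1 else 0) - (if k = k₁ ∧ l = k₀ then 1 else 0)
        else 0) =
        (if k < l then c else 0) + (if l = k₁ then if k = k₀ then
          (if k₀ < k₁ then 1 else 0) else 0 else 0) -
          (if l = k₀ then if k = k₁ then (if k₁ < k₀ then 1 else 0) else 0 else 0) := by
    split_ifs <;> subst_vars <;> omega
  simp only [hsplit, Finset.sum_add_distrib, Finset.sum_sub_distrib, Fintype.sum_ite_eq']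
  ring

theorem inv_relabel_swap {r : ℕ} (T : Fin r → Tab) {j : ℕ} {k₀ k₁ : Fin r} (hne : k₀ ≠ k₁)
    (hj : ∀ k, j ∈ labels (T k) ↔ k = k₀) (hj' : ∀ k, j + 1 ∈ labels (T k) ↔ k = k₁) :
    ((invMulti (fun k => relabel (Equiv.swap j (j + 1)) (T k)) : ℤ) - invMulti T).natAbs = 1 ∧
      ∀ k, invTab (relabel (Equiv.swap j (j + 1)) (T k)) = invTab (T k) := by
  have hinv k : invTab (relabel (Equiv.swap j (j + 1)) (T k)) = invTab (T k) :=
    invTab_relabel_swap fun h => hne (((hj k).1 h.1).symm.trans ((hj' k).1 h.2))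
  refine ⟨?_, hinv⟩
  rw [invMulti_relabel_swap T hinv hj hj']
  rcases hne.lt_or_gt with h | h <;> simp [h, h.not_gt]

theorem mem_flatten_rowInsert (x a : ℕ) :
    ∀ T : Tab, a ∈ (rowInsert x T).flatten ↔ a = x ∨ a ∈ T.flatten
  | [] => by simp [rowInsert]
  | row :: rest => by
    unfold rowInsert
    split
    · next h =>
      rw [List.flatten_cons, List.mem_append, mem_flatten_rowInsert, List.set_eq_take_cons_drop _ h]
      conv_rhs => rw [← List.take_append_drop (row.findIdx _) row, ← List.getElem_cons_drop h]
      simp only [List.flatten_cons, List.mem_append, List.mem_cons, List.get_eq_getElem]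
      tauto
    · simp only [List.flatten_cons, List.mem_append, List.mem_singleton]
      tauto

theorem mem_flatten_place (Q : Tab) (i lab a : ℕ) :
    a ∈ (place Q i lab).flatten ↔ a = lab ∨ a ∈ Q.flatten := by
  unfold place
  split
  · next h =>
    rw [List.getD_eq_getElem _ _ h, List.set_eq_take_cons_drop _ h]
    conv_rhs => rw [← List.take_append_drop i Q, ← List.getElem_cons_drop h]
    simp only [List.flatten_append, List.flatten_cons, List.mem_append, List.mem_cons]
    tauto
  · simp [or_comm]

theorem mem_flatten_foldl_RSstep (word : List (ℕ × ℕ)) (a : ℕ) :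
    ∀ PQ : Tab × Tab,
      (a ∈ (word.foldl RSstep PQ).1.flatten ↔ a ∈ PQ.1.flatten ∨ a ∈ word.map Prod.fst) ∧
      (a ∈ (word.foldl RSstep PQ).2.flatten ↔ a ∈ PQ.2.flatten ∨ a ∈ word.map Prod.snd) := by
  induction word with
  | nil => simp
  | cons xl word ih =>
    intro PQ
    simp only [List.foldl_cons, ih, List.map_cons, List.mem_cons, RSstep, mem_flatten_rowInsert,
      mem_flatten_place]
    tauto

theorem mem_labels_RSword_fst (word : List (ℕ × ℕ)) (a : ℕ) :
    a ∈ labels (RSword word).1 ↔ a ∈ word.map Prod.fst := by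
  simp [labels, RSword, (mem_flatten_foldl_RSstep word a _).1]

theorem mem_labels_RSword_snd (word : List (ℕ × ℕ)) (a : ℕ) :
    a ∈ labels (RSword word).2 ↔ a ∈ word.map Prod.snd := by
  simp [labels, RSword, (mem_flatten_foldl_RSstep word a _).2]

theorem place_relabel (g : ℕ → ℕ) (Q : Tab) (i lab : ℕ) :
    place (relabel g Q) i (g lab) = relabel g (place Q i lab) := by
  unfold place
  rw [length_relabel]
  split_ifs with h
  · rw [getD_relabel]
    simp [relabel, List.map_set]
  · simp [relabel]

theorem RSword_relabel_snd (g : ℕ → ℕ) (word : List (ℕ × ℕ)) :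
    RSword (word.map (Prod.map id g)) = ((RSword word).1, relabel g (RSword word).2) := by
  suffices ∀ P Q, (word.map (Prod.map id g)).foldl RSstep (P, relabel g Q) =
      ((word.foldl RSstep (P, Q)).1, relabel g (word.foldl RSstep (P, Q)).2) from this [] []
  induction word with
  | nil => simp
  | cons xl word ih =>
    intro P Q
    simp only [List.map_cons, List.foldl_cons, ← ih]
    simp [RSstep, place_relabel]

theorem List.findIdx_congr {α : Type*} {p q : α → Bool} :
    ∀ {l : List α}, (∀ a ∈ l, p a = q a) → l.findIdx p = l.findIdx q
  | [], _ => rfl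
  | a :: l, h => by
    simp [List.findIdx_cons, h a List.mem_cons_self,
      List.findIdx_congr fun b hb => h b (List.mem_cons_of_mem _ hb)]

theorem rowInsert_relabel {f : ℕ → ℕ} {S : Set ℕ} (hf : StrictMonoOn f S) :
    ∀ (T : Tab) (x : ℕ), x ∈ S → (∀ y ∈ T.flatten, y ∈ S) →
      rowInsert (f x) (relabel f T) = relabel f (rowInsert x T)
  | [], _, _, _ => rfl
  | row :: rest, x, hx, hT => by
    have hrow : ∀ y ∈ row, y ∈ S := fun y hy => hT y (List.mem_flatten.2 ⟨row, by simp, hy⟩)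
    have hrest : ∀ y ∈ rest.flatten, y ∈ S := fun y hy => hT y (by simp_all)
    have hidx : (row.map f).findIdx (fun y => decide (f x < y)) =
        row.findIdx (fun y => decide (x < y)) := by
      rw [List.findIdx_map]
      exact List.findIdx_congr fun y hy => by simp [hf.lt_iff_lt hx (hrow y hy)]
    change rowInsert (f x) (row.map f :: relabel f rest) = _
    unfold rowInsert
    simp only [hidx, List.length_map]
    split
    · next h =>
      simp only [List.get_eq_getElem, List.getElem_map]
      rw [rowInsert_relabel hf rest _ (hrow _ (List.getElem_mem h)) hrest]
      simp [relabel, List.map_set]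
    · simp [relabel]

theorem foldl_RSstep_relabel_fst {f : ℕ → ℕ} {S : Set ℕ} (hf : StrictMonoOn f S) :
    ∀ (word : List (ℕ × ℕ)), (∀ x ∈ word.map Prod.fst, x ∈ S) →
      ∀ P Q : Tab, (∀ y ∈ P.flatten, y ∈ S) →
      (word.map (Prod.map f id)).foldl RSstep (relabel f P, Q) =
        (relabel f (word.foldl RSstep (P, Q)).1, (word.foldl RSstep (P, Q)).2)
  | [], _, _, _, _ => rfl
  | xl :: word, hword, P, Q, hP => by
    have hx : xl.1 ∈ S := hword _ List.mem_cons_self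
    have hstep : RSstep (relabel f P, Q) (f xl.1, xl.2) =
        (relabel f (RSstep (P, Q) xl).1, (RSstep (P, Q) xl).2) := by
      simp only [RSstep, rowInsert_relabel hf P _ hx hP, getD_relabel, length_relabel,
        List.length_map]
    simp only [List.map_cons, List.foldl_cons, Prod.map, id, hstep]
    refine foldl_RSstep_relabel_fst hf word (fun x hx' => hword x (List.mem_cons_of_mem _ hx'))
      _ _ fun y hy => ?_
    rcases (mem_flatten_rowInsert _ _ _).1 hy with rfl | hy
    exacts [hx, hP y hy]

theorem RSword_relabel_fst {f : ℕ → ℕ} (word : List (ℕ × ℕ))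
    (hf : StrictMonoOn f {x | x ∈ word.map Prod.fst}) :
    RSword (word.map (Prod.map f id)) = (relabel f (RSword word).1, (RSword word).2) :=
  foldl_RSstep_relabel_fst hf word (fun _ => id) [] [] (by simp)

theorem List.filter_finRange_comp_perm_symm {n : ℕ} (e : Equiv.Perm (Fin n)) (p : Fin n → Bool)
    (he : StrictMonoOn e {i | p i}) :
    (List.finRange n).filter (fun i => p (e.symm i)) = ((List.finRange n).filter p).map e := by
  refine List.Pairwise.eq_of_mem_iff ((List.pairwise_lt_finRange n).filter _) ?_ fun i => ?_
  · rw [List.pairwise_map]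
    exact ((List.pairwise_lt_finRange n).filter p).imp_of_mem fun ha hb hab =>
      he (List.mem_filter.1 ha).2 (List.mem_filter.1 hb).2 hab
  · simp only [List.mem_filter, List.mem_finRange, true_and, List.mem_map]
    exact ⟨fun h => ⟨_, h, e.apply_symm_apply i⟩, by rintro ⟨a, ha, rfl⟩; simpa using ha⟩

theorem val_add_one_swap {n : ℕ} (p q i : Fin n) :
    ((Equiv.swap p q i : Fin n) : ℕ) + 1 = Equiv.swap ((p : ℕ) + 1) ((q : ℕ) + 1) ((i : ℕ) + 1) :=
  ((add_left_injective 1).comp Fin.val_injective |>.swap_apply p q i).symm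

section

variable {r n : ℕ}

theorem add_one_mem_map_snd_wordPairs (w : GW r n) (k : ℕ) (i : Fin n) :
    (i : ℕ) + 1 ∈ (wordPairs w k).map Prod.snd ↔ (w.a i).val = k := by
  simp [wordPairs, labelIdx, Fin.val_inj]

theorem add_one_mem_map_fst_wordPairs (w : GW r n) (k : ℕ) (i : Fin n) :
    (i : ℕ) + 1 ∈ (wordPairs w k).map Prod.fst ↔ (w.a (w.σ⁻¹ i)).val = k := by
  simp only [wordPairs, labelIdx, List.map_map, List.mem_map, List.mem_filter, List.mem_finRange,
    true_and, decide_eq_true_eq, Function.comp, Nat.add_right_cancel_iff, Fin.val_inj]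
  constructor
  · rintro ⟨a, ha, rfl⟩
    simpa using ha
  · exact fun h => ⟨_, h, w.σ.apply_symm_apply i⟩

theorem add_one_mem_labels_Qtab [NeZero r] (w : GW r n) (i : Fin n) (k : Fin r) :
    (i : ℕ) + 1 ∈ labels (Qtab w k) ↔ k = ⟨(w.a i).val, ZMod.val_lt _⟩ := by
  rw [Qtab, mem_labels_RSword_snd, add_one_mem_map_snd_wordPairs, Fin.ext_iff, eq_comm]

theorem add_one_mem_labels_Ptab [NeZero r] (w : GW r n) (i : Fin n) (k : Fin r) :
    (i : ℕ) + 1 ∈ labels (Ptab w k) ↔ k = ⟨(w.a (w.σ⁻¹ i)).val, ZMod.val_lt _⟩ := by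
  rw [Ptab, mem_labels_RSword_fst, add_one_mem_map_fst_wordPairs, Fin.ext_iff, eq_comm]

section Operators

variable {w : GW r n} {j : ℕ} {h1 : 1 ≤ j} {h2 : j + 1 ≤ n}

theorem wordPairs_Rop [NeZero r] (hadm : RightAdm w j h1 h2) (k : ℕ) :
    wordPairs (Rop w j h1 h2) k = (wordPairs w k).map (Prod.map id (Equiv.swap j (j + 1))) := by
  set p : Fin n := ⟨j - 1, by omega⟩
  set q : Fin n := ⟨j, by omega⟩
  have hpq : p ⋖ q := Fin.covBy_iff.2 (by simp [p, q, Nat.covBy_iff_add_one_eq]; omega)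
  have hlab : labelIdx (Rop w j h1 h2) k = (labelIdx w k).map (Equiv.swap p q) := by
    rw [labelIdx, labelIdx, ← List.filter_finRange_comp_perm_symm, Equiv.symm_swap]
    · exact List.filter_congr fun i _ => by simp [Rop, sEl, p, q]
    · exact Equiv.strictMonoOn_swap_of_covBy hpq fun ⟨hpk, hqk⟩ =>
        hadm (ZMod.val_injective r ((of_decide_eq_true hpk).trans (of_decide_eq_true hqk).symm))
  have hp : (p : ℕ) + 1 = j := by simp [p]; omega
  rw [wordPairs, wordPairs, hlab, List.map_map, List.map_map]
  refine List.map_congr_left fun i _ => Prod.ext ?_ ?_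
  · simp [Rop, sEl, p, q]
  · simp only [Function.comp, Prod.map, id, val_add_one_swap, hp]
    rfl

theorem wordPairs_Lop (k : ℕ) :
    wordPairs (Lop w j h1 h2) k = (wordPairs w k).map (Prod.map (Equiv.swap j (j + 1)) id) := by
  have hlab : labelIdx (Lop w j h1 h2) k = labelIdx w k :=
    List.filter_congr fun i _ => by simp [Lop, sEl]
  have hp : j - 1 + 1 = j := by omega
  rw [wordPairs, wordPairs, hlab, List.map_map]
  refine List.map_congr_left fun i _ => Prod.ext ?_ rfl
  simp only [Function.comp, Prod.map, Lop, sEl, GW.mul_sigma, Equiv.Perm.mul_apply,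
    val_add_one_swap, hp]

theorem Qtab_Rop [NeZero r] (hadm : RightAdm w j h1 h2) (k : Fin r) :
    Qtab (Rop w j h1 h2) k = relabel (Equiv.swap j (j + 1)) (Qtab w k) := by
  rw [Qtab, wordPairs_Rop hadm, RSword_relabel_snd, Qtab]

theorem Ptab_Lop [NeZero r] (hadm : LeftAdm w j h1 h2) (k : Fin r) :
    Ptab (Lop w j h1 h2) k = relabel (Equiv.swap j (j + 1)) (Ptab w k) := by
  have hp : ((⟨j - 1, by omega⟩ : Fin n) : ℕ) + 1 = j := by simp; omega
  rw [Ptab, wordPairs_Lop, RSword_relabel_fst, Ptab]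
  refine Equiv.strictMonoOn_swap_of_covBy (Order.covBy_add_one j) fun ⟨hj, hj'⟩ => hadm ?_
  rw [Set.mem_ofPred_eq, ← hp, add_one_mem_map_fst_wordPairs] at hj
  rw [Set.mem_ofPred_eq, add_one_mem_map_fst_wordPairs (i := ⟨j, by omega⟩)] at hj'
  exact ZMod.val_injective r (hj.trans hj'.symm)

end Operators

end

theorem inv_change_of_admissible_general (r n : ℕ) (hr : 1 ≤ r)
    (w : GW r n) (j : ℕ) (h1 : 1 ≤ j) (h2 : j + 1 ≤ n) :
    (RightAdm w j h1 h2 →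
      ((invMulti (Qtab (Rop w j h1 h2)) : ℤ) - (invMulti (Qtab w) : ℤ)).natAbs = 1 ∧
        ∀ k : Fin r, invTab (Qtab (Rop w j h1 h2) k) = invTab (Qtab w k)) ∧
    (LeftAdm w j h1 h2 →
      ((invMulti (Ptab (Lop w j h1 h2)) : ℤ) - (invMulti (Ptab w) : ℤ)).natAbs = 1 ∧
        ∀ k : Fin r, invTab (Ptab (Lop w j h1 h2) k) = invTab (Ptab w k)) := by
  have : NeZero r := ⟨by omega⟩
  let p : Fin n := ⟨j - 1, by omega⟩
  let q : Fin n := ⟨j, by omega⟩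
  have hp : (p : ℕ) + 1 = j := by simp [p]; omega
  have hne {a b : ZMod r} (h : a ≠ b) : (⟨a.val, a.val_lt⟩ : Fin r) ≠ ⟨b.val, b.val_lt⟩ :=
    fun h' => h (ZMod.val_injective r (Fin.mk.inj h'))
  constructor
  · intro hadm
    rw [show Qtab (Rop w j h1 h2) = _ from funext (Qtab_Rop hadm)]
    exact inv_relabel_swap _ (hne hadm)
      (fun k => by simpa only [hp] using add_one_mem_labels_Qtab w p k)
      (add_one_mem_labels_Qtab w q)
  · intro hadm
    rw [show Ptab (Lop w j h1 h2) = _ from funext (Ptab_Lop hadm)]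
    exact inv_relabel_swap _ (hne hadm)
      (fun k => by simpa only [hp] using add_one_mem_labels_Ptab w p k)
      (add_one_mem_labels_Ptab w q)

/-- **Proposition.** If `R_j` is right admissible for `w`, then
`|inv (Q (R_j w)) - inv (Q w)| = 1` while `inv (Q_k (R_j w)) = inv (Q_k w)` for
every component index `k`; dually, if `L_j` is left admissible for `w`, then
`|inv (P (L_j w)) - inv (P w)| = 1` while `inv (P_k (L_j w)) = inv (P_k w)` for
every `k`. -/
theorem inv_change_of_admissible (r n : ℕ) (hr : 1 ≤ r) (hn : 1 ≤ n)
    (w : GW r n) (j : ℕ) (h1 : 1 ≤ j) (h2 : j + 1 ≤ n) :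
    (RightAdm w j h1 h2 →
      ((invMulti (Qtab (Rop w j h1 h2)) : ℤ) - (invMulti (Qtab w) : ℤ)).natAbs = 1 ∧
        ∀ k : Fin r, invTab (Qtab (Rop w j h1 h2) k) = invTab (Qtab w k)) ∧
    (LeftAdm w j h1 h2 →
      ((invMulti (Ptab (Lop w j h1 h2)) : ℤ) - (invMulti (Ptab w) : ℤ)).natAbs = 1 ∧
        ∀ k : Fin r, invTab (Ptab (Lop w j h1 h2) k) = invTab (Ptab w k)) :=
  inv_change_of_admissible_general r n hr w j h1 h2
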